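/- Let s_1, ..., s_{n+1} be exchangeable real-valued random variables that are almost surely pairwise distinct. Let q̂ be the ⌈(1-α)(n+1)⌉-th smallest value among s_1, ..., s_n, ∞. Then P(s_{n+1} ≤ q̂) = ⌈(1-α)(n+1)⌉/(n+1) ≤ (1-α) + 1/(n+1). -/

import Mathlib

/-!
On the event that the scores are pairwise distinct, `s (last n) ≤ qhat` holds exactly when the
rank of `s (last n)` among all `n + 1` scores is at most `k`. Exchangeability gives every score
the same probability of having rank at most `k`, and since the ranks are a permutation of
`1, …, n + 1`, exactly `k` scores do; summing over the scores gives `(n + 1) • P(rank ≤ k) = k`.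
-/

open MeasureTheory Finset Function
open scoped ENNReal

/-- The `k`-th smallest value (1-indexed) of a finite tuple of reals. -/
noncomputable def kthSmallest {n : ℕ} (f : Fin n → ℝ) (k : ℕ) : ℝ :=
  ((List.ofFn f).mergeSort (fun a b => a ≤ b)).getD (k - 1) 0

theorem List.le_getElem_iff_countP_lt_le_of_pairwise {α : Type*} [LinearOrder α] {L : List α}
    (hL : L.Pairwise (· ≤ ·)) (x : α) {j : ℕ} (hj : j < L.length) :
    x ≤ L[j] ↔ L.countP (· < x) ≤ j := by
  induction L generalizing j with
  | nil => simp at hj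
  | cons a t ih =>
    obtain ⟨ha, ht⟩ := List.pairwise_cons.mp hL
    have hcount : ¬ a < x → t.countP (· < x) = 0 := fun hax =>
      List.countP_eq_zero.mpr fun l hl => by simpa using (not_lt.mp hax).trans (ha l hl)
    cases j with
    | zero =>
      by_cases hax : a < x
      · simp [hax, hax.not_ge]
      · simp [hax, hcount hax, not_lt.mp hax]
    | succ j =>
      rw [List.getElem_cons_succ, ih ht (by simpa using hj), List.countP_cons]
      by_cases hax : a < x
      · simp [hax]
      · simp [hax, hcount hax]

theorem List.countP_ofFn {α : Type*} {n : ℕ} (f : Fin n → α) (p : α → Bool) :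
    (List.ofFn f).countP p = #{i | p (f i)} := by
  rw [List.ofFn_eq_map, List.countP_map, List.countP_eq_length_filter, card_def, filter_val,
    Fin.univ_def]
  simp [Function.comp_def]

theorem le_kthSmallest_iff {n k : ℕ} (hk : 1 ≤ k) (hkn : k ≤ n) (f : Fin n → ℝ) (x : ℝ) :
    x ≤ kthSmallest f k ↔ #{i | f i < x} < k := by
  set L := (List.ofFn f).mergeSort (fun a b => a ≤ b)
  have hperm : L.Perm (List.ofFn f) := List.mergeSort_perm _ _
  have hj : k - 1 < L.length := by rw [hperm.length_eq, List.length_ofFn]; omega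
  rw [kthSmallest, List.getD_eq_getElem _ _ hj,
    List.le_getElem_iff_countP_lt_le_of_pairwise (List.pairwise_mergeSort' _ _) x hj,
    hperm.countP_eq, List.countP_ofFn]
  simp only [decide_eq_true_eq]
  omega

section Rank

variable {ι α : Type*} [Fintype ι] [LinearOrder α]

def rank (v : ι → α) (j : ι) : ℕ := #{i | v i ≤ v j}

theorem rank_comp_perm (v : ι → α) (σ : Equiv.Perm ι) (j : ι) :
    rank (v ∘ σ) j = rank v (σ j) :=
  card_equiv σ (by simp)

theorem rank_lt_rank {v : ι → α} {a b : ι} (h : v a < v b) : rank v a < rank v b := by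
  refine card_lt_card ⟨monotone_filter_right _ fun i _ hi => hi.trans h.le, fun hsub => ?_⟩
  have hb : b ∈ ({i | v i ≤ v b} : Finset ι) := by simp
  exact h.not_ge (by simpa using hsub hb)

theorem rank_injective {v : ι → α} (hv : Injective v) : Injective (rank v) := by
  intro a b hab
  rcases lt_trichotomy (v a) (v b) with hlt | heq | hgt
  · exact absurd hab (rank_lt_rank hlt).ne
  · exact hv heq
  · exact absurd hab (rank_lt_rank hgt).ne'

theorem rank_mem_Icc (v : ι → α) (j : ι) : rank v j ∈ Icc 1 (Fintype.card ι) :=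
  mem_Icc.mpr ⟨card_pos.mpr ⟨j, by simp⟩, card_le_univ _⟩

theorem image_rank_univ {v : ι → α} (hv : Injective v) :
    univ.image (rank v) = Icc 1 (Fintype.card ι) :=
  eq_of_subset_of_card_le
    (fun r hr => by obtain ⟨j, -, rfl⟩ := mem_image.mp hr; exact rank_mem_Icc v j)
    (by simp [card_image_of_injective _ (rank_injective hv)])

theorem card_rank_le {v : ι → α} (hv : Injective v) {k : ℕ} (hk : k ≤ Fintype.card ι) :
    #{j | rank v j ≤ k} = k := by
  have himage : ({j | rank v j ≤ k} : Finset ι).image (rank v) = Icc 1 k := by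
    rw [← filter_image (p := (· ≤ k)), image_rank_univ hv]
    ext r
    simp only [mem_filter, mem_Icc]
    omega
  rw [← card_image_of_injective _ (rank_injective hv), himage, Nat.card_Icc, Nat.add_sub_cancel]

theorem measurable_rank (j : ι) : Measurable fun w : ι → ℝ => rank w j := by
  simp only [rank, card_filter]
  exact Finset.measurable_sum _ fun i _ =>
    Measurable.ite (measurableSet_le (measurable_pi_apply i) (measurable_pi_apply j))
      measurable_const measurable_const

end Rank

theorem rank_last_eq {n : ℕ} {α : Type*} [LinearOrder α] {v : Fin (n + 1) → α}
    (hv : Injective v) :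
    rank v (Fin.last n) = #{i : Fin n | v i.castSucc < v (Fin.last n)} + 1 := by
  rw [rank, card_filter, card_filter, Fin.sum_univ_castSucc, if_pos le_rfl]
  congr 1
  refine sum_congr rfl fun i _ => ?_
  have hne : v i.castSucc ≠ v (Fin.last n) := hv.ne (Fin.castSucc_lt_last i).ne
  simp only [hne.le_iff_lt]

theorem le_kthSmallest_iff_rank_le {n k : ℕ} (hk : 1 ≤ k) (hkn : k ≤ n) {v : Fin (n + 1) → ℝ}
    (hv : Injective v) :
    v (Fin.last n) ≤ kthSmallest (fun i : Fin n => v i.castSucc) k ↔ rank v (Fin.last n) ≤ k := by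
  rw [le_kthSmallest_iff hk hkn, rank_last_eq hv]
  omega

def Exchangeable {Ω ι β : Type*} [MeasurableSpace Ω] [MeasurableSpace β] (P : Measure Ω)
    (s : ι → Ω → β) : Prop :=
  ∀ σ : Equiv.Perm ι,
    Measure.map (fun ω => fun i => s (σ i) ω) P = Measure.map (fun ω => fun i => s i ω) P

section Exchangeable

variable {Ω ι : Type*} [MeasurableSpace Ω] {P : Measure Ω}

theorem Exchangeable.measure_preimage_perm {β : Type*} [MeasurableSpace β] {s : ι → Ω → β}
    (hs : Exchangeable P s) (hmeas : ∀ i, Measurable (s i))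
    (σ : Equiv.Perm ι) {B : Set (ι → β)} (hB : MeasurableSet B) :
    P {ω | (fun i => s (σ i) ω) ∈ B} = P {ω | (fun i => s i ω) ∈ B} := by
  have h := congrArg (· B) (hs σ)
  rwa [Measure.map_apply (by fun_prop) hB, Measure.map_apply (by fun_prop) hB] at h

theorem Exchangeable.measure_rank_le_eq [Fintype ι] {s : ι → Ω → ℝ} (hs : Exchangeable P s)
    (hmeas : ∀ i, Measurable (s i)) (j j' : ι) (k : ℕ) :
    P {ω | rank (s · ω) j ≤ k} = P {ω | rank (s · ω) j' ≤ k} := by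
  classical
  have h := hs.measure_preimage_perm hmeas (Equiv.swap j' j)
    (measurable_rank j' (measurableSet_Iic (a := k)))
  have hcomp : ∀ ω, rank (fun i => s (Equiv.swap j' j i) ω) j' = rank (s · ω) j := fun ω =>
    (rank_comp_perm (s · ω) _ j').trans (by rw [Equiv.swap_apply_left])
  simpa only [Set.mem_preimage, Set.mem_Iic, hcomp] using h

theorem Exchangeable.card_mul_measure_rank_le [Fintype ι] {s : ι → Ω → ℝ} [IsProbabilityMeasure P]
    (hs : Exchangeable P s) (hmeas : ∀ i, Measurable (s i)) (hinj : ∀ᵐ ω ∂P, Injective (s · ω))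
    {k : ℕ} (hk : k ≤ Fintype.card ι) (j : ι) :
    Fintype.card ι * P {ω | rank (s · ω) j ≤ k} = k := by
  have hA : ∀ i, MeasurableSet {ω | rank (s · ω) i ≤ k} := fun i =>
    (measurable_rank i).comp (by fun_prop) measurableSet_Iic
  calc Fintype.card ι * P {ω | rank (s · ω) j ≤ k}
      = ∑ i, P {ω | rank (s · ω) i ≤ k} := by
        simp [hs.measure_rank_le_eq hmeas _ j]
    _ = ∫⁻ ω, ∑ i, {ω | rank (s · ω) i ≤ k}.indicator 1 ω ∂P := by
        rw [lintegral_finsetSum _ fun i _ => measurable_one.indicator (hA i)]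
        simp only [lintegral_indicator_one (hA _)]
    _ = ∫⁻ _, (k : ℝ≥0∞) ∂P := by
        refine lintegral_congr_ae (hinj.mono fun ω hω => ?_)
        simp only [Set.indicator_apply, Set.mem_ofPred_eq, Pi.one_apply]
        rw [← natCast_card_filter, card_rank_le hω hk]
    _ = k := by simp

end Exchangeable

theorem natCeil_mul_div_le_add_one_div {a b : ℝ} (ha : 0 ≤ a) (hb : 0 < b) :
    (⌈a * b⌉₊ : ℝ) / b ≤ a + 1 / b :=
  calc (⌈a * b⌉₊ : ℝ) / b ≤ (a * b + 1) / b := by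
        gcongr; exact (Nat.ceil_lt_add_one (by positivity)).le
    _ = a + 1 / b := by field_simp

theorem split_conformal_upper_bound_general
    {Ω : Type*} [MeasurableSpace Ω] (P : Measure Ω) [IsProbabilityMeasure P]
    (n : ℕ) (α : ℝ) (hα : α ∈ Set.Ioo (0 : ℝ) 1)
    (s : Fin (n + 1) → Ω → ℝ) (hmeas : ∀ i, Measurable (s i))
    (hexch : ∀ σ : Equiv.Perm (Fin (n + 1)),
      Measure.map (fun ω => fun i => s (σ i) ω) P
        = Measure.map (fun ω => fun i => s i ω) P)
    (hdistinct : P {ω | ∀ i j : Fin (n + 1), i ≠ j → s i ω ≠ s j ω} = 1)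
    (k : ℕ) (hk : k = ⌈(1 - α) * (n + 1)⌉₊) (hkn : k ≤ n)
    (qhat : Ω → ℝ)
    (hq : ∀ ω, qhat ω = kthSmallest (fun i : Fin n => s i.castSucc ω) k) :
    (P {ω | s (Fin.last n) ω ≤ qhat ω}).toReal = (k : ℝ) / (n + 1) ∧
      (k : ℝ) / (n + 1) ≤ (1 - α) + 1 / (n + 1) := by
  have h1α : 0 < 1 - α := sub_pos.mpr hα.2
  have hk1 : 1 ≤ k := hk ▸ Nat.one_le_ceil_iff.mpr (by positivity)
  have hinj : ∀ᵐ ω ∂P, Injective (s · ω) := by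
    have hD : MeasurableSet {ω | ∀ i j : Fin (n + 1), i ≠ j → s i ω ≠ s j ω} := by measurability
    filter_upwards [(ae_iff_measure_eq hD.nullMeasurableSet).mpr (by rw [hdistinct, measure_univ])]
      with ω hω i j hij
    exact not_imp_not.mp (hω i j) hij
  have hcover : P {ω | s (Fin.last n) ω ≤ qhat ω} = P {ω | rank (s · ω) (Fin.last n) ≤ k} :=
    measure_congr <| Filter.eventuallyEq_set.mpr <| hinj.mono fun ω hω => by
      simp only [Set.mem_ofPred_eq, hq, le_kthSmallest_iff_rank_le hk1 hkn hω]
  have hmass := Exchangeable.card_mul_measure_rank_le hexch hmeas hinj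
    (hkn.trans (by simp)) (Fin.last n)
  refine ⟨?_, hk ▸ natCeil_mul_div_le_add_one_div h1α.le (by positivity)⟩
  have hreal := congrArg ENNReal.toReal hmass
  rw [ENNReal.toReal_mul, ← hcover, Fintype.card_fin, ENNReal.toReal_natCast,
    ENNReal.toReal_natCast, Nat.cast_succ] at hreal
  rw [eq_div_iff (by positivity)]
  linarith

/-- **Upper coverage bound for split conformal prediction.**
If `s_1, …, s_{n+1}` are exchangeable and a.s. pairwise distinct, and
`q̂` is the `⌈(1-α)(n+1)⌉`-th smallest value among `s_1, …, s_n, ∞`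
(assumed finite: `⌈(1-α)(n+1)⌉ ≤ n`), then
`P(s_{n+1} ≤ q̂) = ⌈(1-α)(n+1)⌉/(n+1) ≤ (1-α) + 1/(n+1)`. -/
theorem split_conformal_upper_bound
    {Ω : Type*} [MeasurableSpace Ω] (P : Measure Ω) [IsProbabilityMeasure P]
    (n : ℕ) (hn : 0 < n) (α : ℝ) (hα : α ∈ Set.Ioo (0 : ℝ) 1)
    (s : Fin (n + 1) → Ω → ℝ) (hmeas : ∀ i, Measurable (s i))
    (hexch : ∀ σ : Equiv.Perm (Fin (n + 1)),
      Measure.map (fun ω => fun i => s (σ i) ω) P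
        = Measure.map (fun ω => fun i => s i ω) P)
    (hdistinct : P {ω | ∀ i j : Fin (n + 1), i ≠ j → s i ω ≠ s j ω} = 1)
    (k : ℕ) (hk : k = ⌈(1 - α) * (n + 1)⌉₊) (hkn : k ≤ n)
    (qhat : Ω → ℝ)
    (hq : ∀ ω, qhat ω = kthSmallest (fun i : Fin n => s i.castSucc ω) k) :
    (P {ω | s (Fin.last n) ω ≤ qhat ω}).toReal = (k : ℝ) / (n + 1) ∧
      (k : ℝ) / (n + 1) ≤ (1 - α) + 1 / (n + 1) :=
  split_conformal_upper_bound_general P n α hα s hmeas hexch hdistinct k hk hkn qhat hq
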